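/- Let V be an absolute matrix order unit space satisfying condition (T) and let p, q ∈ 𝒪𝒫_∞(V). Then p ≈ q if and only if p ⊕ e^m ∼ q ⊕ e^m for some m ∈ ℕ. -/

import Mathlib

noncomputable section

open scoped Matrix.Norms.L2Operator

/-! ### The *-algebra 𝔉 of ∞×∞ complex matrices with finitely many nonzero entries -/

/-- `∞ × ∞` complex matrices (indexed by `ℕ × ℕ`). -/
abbrev FMat := ℕ → ℕ → ℂ

/-- The matrix has (at most) finitely many nonzero entries: it is supported in some
`n × n` top-left block. -/
def IsFin (a : FMat) : Prop := ∃ n, ∀ i j, (n ≤ i ∨ n ≤ j) → a i j = 0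

/-- Matrix multiplication in `𝔉` (the `tsum` is a finite sum for finitely supported
matrices). -/
def fmul (a b : FMat) : FMat := fun i k => ∑' j, a i j * b j k

/-- The involution (conjugate transpose) on `𝔉`. -/
def fstar (a : FMat) : FMat := fun i j => starRingEnd ℂ (a j i)

/-- The matrix unit `𝔢_{i,j}`. -/
def eUnit (i j : ℕ) : FMat := fun k l => if k = i ∧ l = j then 1 else 0

/-- `𝔍ₙ = Σ_{i<n} 𝔢_{i,i}`, the partial identities. -/
def JMat (n : ℕ) : FMat := fun k l => if k = l ∧ k < n then 1 else 0

/-- `𝔎ₙ = Σ_{i<n} 𝔢_{i,n+i}`, used for `2×2`-block constructions. -/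
def KMat (n : ℕ) : FMat := fun k l => if l = k + n ∧ k < n then 1 else 0

/-- The diagonal idempotent `Σ_{i ∈ s} 𝔢_{i,i}` associated to a finite set `s ⊂ ℕ`. -/
def finsetDiag (s : Finset ℕ) : FMat := fun k l => if k = l ∧ k ∈ s then 1 else 0

/-- The operator norm on `𝔉`: the supremum of the (C*-algebra) operator norms of the
finite top-left blocks (for a finitely supported matrix the blocks stabilize). -/
def fnorm (a : FMat) : ℝ :=
  ⨆ n : ℕ, ‖(Matrix.of fun i j : Fin n => a i j : Matrix (Fin n) (Fin n) ℂ)‖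

/-- The order `o(𝔞)` of a finitely supported matrix: the least `n` such that `𝔞` is
supported in the top-left `n × n` block. -/
def matOrd (a : FMat) : ℕ := sInf {n | ∀ i j, (n ≤ i ∨ n ≤ j) → a i j = 0}

/-- A local unitary in `𝔉`: `𝔞*𝔞 = 𝔍_{o(𝔞)} = 𝔞𝔞*`. -/
def IsLocalUnitary (a : FMat) : Prop :=
  IsFin a ∧ fmul (fstar a) a = JMat (matOrd a) ∧ fmul a (fstar a) = JMat (matOrd a)

/-! ### Non-degenerate *-𝔉-bimodules -/

/-- A non-degenerate `*`-`𝔉`-bimodule structure on a complex vector space `V`: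
left and right actions of (finitely supported) infinite matrices together with an
involution, compatible with each other and with the complex scalars, such that every
element is `𝔍ₙ·v·𝔍ₙ` for some `n`. -/
structure FBimod (V : Type*) [AddCommGroup V] [Module ℂ V] where
  lsmul : FMat → V → V
  rsmul : V → FMat → V
  star : V → V
  lsmul_add : ∀ a u v, lsmul a (u + v) = lsmul a u + lsmul a v
  rsmul_add : ∀ u v b, rsmul (u + v) b = rsmul u b + rsmul v b
  add_lsmul : ∀ a b v, IsFin a → IsFin b → lsmul (a + b) v = lsmul a v + lsmul b v
  rsmul_add' : ∀ v a b, IsFin a → IsFin b → rsmul v (a + b) = rsmul v a + rsmul v b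
  smul_lsmul : ∀ (c : ℂ) a v, IsFin a → lsmul (c • a) v = c • lsmul a v
  smul_rsmul : ∀ (c : ℂ) v a, IsFin a → rsmul v (c • a) = c • rsmul v a
  mul_lsmul : ∀ a b v, IsFin a → IsFin b → lsmul (fmul a b) v = lsmul a (lsmul b v)
  rsmul_mul : ∀ v a b, IsFin a → IsFin b → rsmul v (fmul a b) = rsmul (rsmul v a) b
  lsmul_rsmul : ∀ a v b, IsFin a → IsFin b → rsmul (lsmul a v) b = lsmul a (rsmul v b)
  star_add : ∀ u v, star (u + v) = star u + star v
  star_star : ∀ v, star (star v) = v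
  star_lsmul : ∀ a v, IsFin a → star (lsmul a v) = rsmul (star v) (fstar a)
  star_rsmul : ∀ v a, IsFin a → star (rsmul v a) = lsmul (fstar a) (star v)
  smul_compat : ∀ (c : ℂ) (n : ℕ) v, lsmul (JMat n) (rsmul v (JMat n)) = v →
    lsmul (c • JMat n) v = c • v
  nondeg : ∀ v, ∃ n, lsmul (JMat n) (rsmul v (JMat n)) = v

namespace FBimod

variable {V : Type*} [AddCommGroup V] [Module ℂ V] (M : FBimod V)

/-- `𝔍ₙ 𝔳 𝔍ₙ`. -/
def cut (n : ℕ) (v : V) : V := M.lsmul (JMat n) (M.rsmul v (JMat n))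

/-- The order `o(𝔳)`: the smallest `n` with `𝔍ₙ 𝔳 𝔍ₙ = 𝔳`. -/
def ord (v : V) : ℕ := sInf {n | M.cut n v = v}

/-- `𝔞* 𝔳 𝔞`. -/
def conj (a : FMat) (v : V) : V := M.lsmul (fstar a) (M.rsmul v a)

/-- `C` is a bimodule cone: consists of self-adjoint elements, is closed under
addition and under `𝔳 ↦ 𝔞*𝔳𝔞` for `𝔞 ∈ 𝔉`. -/
def IsCone (C : Set V) : Prop :=
  (∀ v ∈ C, M.star v = v) ∧ (∀ u ∈ C, ∀ v ∈ C, u + v ∈ C) ∧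
    (∀ v ∈ C, ∀ a : FMat, IsFin a → M.conj a v ∈ C)

/-- The cone `C` is proper: `C ∩ (−C) = {0}`. -/
def ConeProper (C : Set V) : Prop := ∀ v ∈ C, -v ∈ C → v = 0

/-- The cone `C` is Archimedean. -/
def ConeArch (C : Set V) : Prop :=
  ∀ u ∈ C, ∀ v : V, M.star v = v → (∀ k : ℝ, 0 < k → (k : ℂ) • u + v ∈ C) → v ∈ C

/-- The cone `C` is generating. -/
def ConeGen (C : Set V) : Prop :=
  ∀ v : V, ∃ v₀ ∈ C, ∃ v₁ ∈ C, ∃ v₂ ∈ C, ∃ v₃ ∈ C,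
    v = v₀ + Complex.I • v₁ - v₂ - Complex.I • v₃

/-- `(𝔳₁, 𝔳₂)ₙ⁺ = 𝔳₁ + 𝔎ₙ* 𝔳₂ 𝔎ₙ` (the diagonal `2×2`-block `diag(𝔳₁,𝔳₂)`). -/
def pairPlus (n : ℕ) (v₁ v₂ : V) : V :=
  v₁ + M.lsmul (fstar (KMat n)) (M.rsmul v₂ (KMat n))

/-- `saₙ(𝔳) = 𝔍ₙ 𝔳 𝔎ₙ + 𝔎ₙ* 𝔳* 𝔍ₙ` (the off-diagonal `2×2`-block of `𝔳`). -/
def san (n : ℕ) (v : V) : V :=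
  M.lsmul (JMat n) (M.rsmul v (KMat n)) +
    M.lsmul (fstar (KMat n)) (M.rsmul (M.star v) (JMat n))

/-- `𝔲` and `𝔳` are `𝔉`-independent: compressed onto disjoint diagonal blocks. -/
def FIndep (u v : V) : Prop :=
  ∃ I J : Finset ℕ, Disjoint I J ∧
    M.lsmul (finsetDiag I) (M.rsmul u (finsetDiag I)) = u ∧
    M.lsmul (finsetDiag J) (M.rsmul v (finsetDiag J)) = v

/-- `(𝔙, C, abs)` is a non-degenerate absolutely ordered `𝔉`-bimodule
(Definition 18 of the paper). -/
structure IsAbsOrd (C : Set V) (abs : V → V) : Prop where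
  cone : M.IsCone C
  abs_mem : ∀ v, abs v ∈ C
  ord_abs_le : ∀ v, M.ord (abs v) ≤ M.ord v
  abs_of_mem : ∀ v ∈ C, abs v = v
  pos_part : ∀ v, M.pairPlus (M.ord v) (abs (M.star v)) (abs v) + M.san (M.ord v) v ∈ C
  abs_smul_le : ∀ (a b : FMat), IsFin a → IsFin b → ∀ v,
    (fnorm a : ℂ) • abs (M.rsmul (abs v) b) - abs (M.lsmul a (M.rsmul v b)) ∈ C
  indep_add : ∀ u v, M.FIndep u v → abs (u + v) = abs u + abs v
  absorb : ∀ u ∈ C, ∀ v ∈ C, ∀ w ∈ C, abs (u - v) = u + v → v - w ∈ C →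
    abs (u - w) = u + w
  ortho_pm : ∀ u ∈ C, ∀ v ∈ C, ∀ w ∈ C, abs (u - v) = u + v → abs (u - w) = u + w →
    abs (u - abs (v + w)) = u + abs (v + w) ∧ abs (u - abs (v - w)) = u + abs (v - w)

/-- `eⁿ = Σ_{i<n} 𝔢_{i,0} 𝔢 𝔢_{0,i}` for an element `𝔢` of order `1`. -/
def epow (e : V) (n : ℕ) : V :=
  ∑ i ∈ Finset.range n, M.lsmul (eUnit i 0) (M.rsmul e (eUnit 0 i))

/-- `𝔢` is a local order unit for `(𝔙, C)`. -/
def IsLocalOrderUnit (C : Set V) (e : V) : Prop :=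
  e ∈ C ∧ M.cut 1 e = e ∧ ∀ v : V, M.cut 1 v = v → ∃ k : ℝ, 0 < k ∧
    M.pairPlus 1 ((k : ℂ) • e) ((k : ℂ) • e) + M.san 1 v ∈ C

/-- `(𝔙, C, 𝔢)` is a local `𝔉`-order unit bimodule. -/
def IsLocalUnitBimod (C : Set V) (e : V) : Prop :=
  M.IsCone C ∧ ConeProper C ∧ M.ConeArch C ∧ M.IsLocalOrderUnit C e

/-- The norm associated to a local order unit:
`‖𝔳‖ = inf { k > 0 : (k𝔢^{o(𝔳)}, k𝔢^{o(𝔳)})⁺_{o(𝔳)} + sa_{o(𝔳)}(𝔳) ∈ C }`. -/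
def lnorm (C : Set V) (e : V) (v : V) : ℝ :=
  sInf {k : ℝ | 0 < k ∧
    M.pairPlus (M.ord v) ((k : ℂ) • M.epow e (M.ord v)) ((k : ℂ) • M.epow e (M.ord v)) +
      M.san (M.ord v) v ∈ C}

/-- `𝔲 ⊥_∞ 𝔳` with respect to the local-order-unit norm. -/
def PerpInf (C : Set V) (e : V) (u v : V) : Prop :=
  ∀ k₁ k₂ : ℝ, M.lnorm C e ((k₁ : ℂ) • u + (k₂ : ℂ) • v) =
    max (M.lnorm C e ((k₁ : ℂ) • u)) (M.lnorm C e ((k₂ : ℂ) • v))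

end FBimod
/-! ### Matrices over a complex *-vector space -/

section MatrixLevel

variable {V : Type*} [AddCommGroup V] [Module ℂ V] [StarAddMonoid V] [StarModule ℂ V]

/-- Conjugate transpose of a rectangular matrix over a `*`-vector space. -/
def mstar {m n : ℕ} (v : Matrix (Fin m) (Fin n) V) : Matrix (Fin n) (Fin m) V :=
  fun i j => star (v j i)

/-- Left action of a scalar matrix: `(a v)_{ij} = Σ_k a_{ik} v_{kj}`. -/
def aSmul {r m n : ℕ} (a : Matrix (Fin r) (Fin m) ℂ) (v : Matrix (Fin m) (Fin n) V) :
    Matrix (Fin r) (Fin n) V :=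
  fun i j => ∑ k, a i k • v k j

/-- Right action of a scalar matrix: `(v b)_{ij} = Σ_k b_{kj} • v_{ik}`. -/
def smulB {m n s : ℕ} (v : Matrix (Fin m) (Fin n) V) (b : Matrix (Fin n) (Fin s) ℂ) :
    Matrix (Fin m) (Fin s) V :=
  fun i j => ∑ k, b k j • v i k

/-- Direct sum (block diagonal) of rectangular matrices over `V`. -/
def dsum {m n r s : ℕ} (v : Matrix (Fin m) (Fin n) V) (w : Matrix (Fin r) (Fin s) V) :
    Matrix (Fin (m + r)) (Fin (n + s)) V :=
  fun i j =>
    if hi : (i : ℕ) < m then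
      (if hj : (j : ℕ) < n then v ⟨i, hi⟩ ⟨j, hj⟩ else 0)
    else
      (if hj : (j : ℕ) < n then 0
       else w ⟨(i : ℕ) - m, by have := i.isLt; omega⟩ ⟨(j : ℕ) - n, by have := j.isLt; omega⟩)

end MatrixLevel

/-- The L2-operator norm of a rectangular complex scalar matrix. -/
def cnorm {r m : ℕ} (a : Matrix (Fin r) (Fin m) ℂ) : ℝ := ‖a‖

/-- Embedding of a finite rectangular complex matrix into `𝔉`. -/
def embC {r m : ℕ} (a : Matrix (Fin r) (Fin m) ℂ) : FMat :=
  fun i j => if hi : i < r then (if hj : j < m then a ⟨i, hi⟩ ⟨j, hj⟩ else 0) else 0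

/-- `e ⊕ ⋯ ⊕ e`: the diagonal matrix with constant diagonal `e`. -/
def diagE {V : Type*} [AddCommGroup V] (e : V) (n : ℕ) : Matrix (Fin n) (Fin n) V :=
  Matrix.of fun i j => if i = j then e else 0

/-! ### Absolutely matrix ordered spaces and absolute matrix order unit spaces -/

/-- An absolutely matrix ordered space structure on a complex `*`-vector space `V`:
matrix cones `Mₙ(V)⁺` and absolute values `|·|_{m,n} : M_{m,n}(V) → Mₙ(V)⁺`
(Definition 4.1 of Karn-Kumar). -/
structure AMOS (V : Type*) [AddCommGroup V] [Module ℂ V] [StarAddMonoid V]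
    [StarModule ℂ V] where
  pos : ∀ n : ℕ, Set (Matrix (Fin n) (Fin n) V)
  abs : ∀ m n : ℕ, Matrix (Fin m) (Fin n) V → Matrix (Fin n) (Fin n) V
  pos_star : ∀ n, ∀ v ∈ pos n, mstar v = v
  pos_add : ∀ n, ∀ u ∈ pos n, ∀ v ∈ pos n, u + v ∈ pos n
  pos_conj : ∀ m n (a : Matrix (Fin n) (Fin m) ℂ), ∀ v ∈ pos n,
    aSmul a.conjTranspose (smulB v a) ∈ pos m
  abs_mem : ∀ m n v, abs m n v ∈ pos n
  abs_of_pos : ∀ n, ∀ v ∈ pos n, abs n n v = v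
  abs_add_self : ∀ n (v : Matrix (Fin n) (Fin n) V), mstar v = v →
    abs n n v + v ∈ pos n ∧ abs n n v - v ∈ pos n
  abs_real_smul : ∀ n (k : ℝ) (v : Matrix (Fin n) (Fin n) V), mstar v = v →
    abs n n ((k : ℂ) • v) = ((|k| : ℝ) : ℂ) • abs n n v
  absorb : ∀ n, ∀ u ∈ pos n, ∀ v ∈ pos n, ∀ w ∈ pos n,
    abs n n (u - v) = u + v → v - w ∈ pos n → abs n n (u - w) = u + w
  ortho_pm : ∀ n, ∀ u ∈ pos n, ∀ v ∈ pos n, ∀ w ∈ pos n,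
    abs n n (u - v) = u + v → abs n n (u - w) = u + w →
    abs n n (u - abs n n (v + w)) = u + abs n n (v + w) ∧
      abs n n (u - abs n n (v - w)) = u + abs n n (v - w)
  abs_smul_le : ∀ (r m n s : ℕ) (α : Matrix (Fin r) (Fin m) ℂ)
    (v : Matrix (Fin m) (Fin n) V) (β : Matrix (Fin n) (Fin s) ℂ),
    (cnorm α : ℂ) • abs n s (smulB (abs m n v) β) - abs r s (aSmul α (smulB v β)) ∈ pos s
  abs_dsum : ∀ (m n r s : ℕ) (v : Matrix (Fin m) (Fin n) V) (w : Matrix (Fin r) (Fin s) V),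
    abs (m + r) (n + s) (dsum v w) = dsum (abs m n v) (abs r s w)

/-- A matrix order unit structure on top of an absolutely matrix ordered space:
an order unit `e` with `V⁺` proper and each `Mₙ(V)⁺` Archimedean. -/
structure AMOUS (V : Type*) [AddCommGroup V] [Module ℂ V] [StarAddMonoid V]
    [StarModule ℂ V] extends AMOS V where
  e : V
  e_pos : diagE e 1 ∈ pos 1
  proper : ∀ v ∈ pos 1, -v ∈ pos 1 → v = 0
  arch : ∀ n (v : Matrix (Fin n) (Fin n) V), mstar v = v →
    (∀ k : ℝ, 0 < k → (k : ℂ) • diagE e n + v ∈ pos n) →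
    v ∈ pos n
  unit : ∀ n (v : Matrix (Fin n) (Fin n) V), mstar v = v →
    ∃ k : ℝ, 0 < k ∧ (k : ℂ) • diagE e n - v ∈ pos n ∧
      (k : ℂ) • diagE e n + v ∈ pos n

namespace AMOUS

variable {V : Type*} [AddCommGroup V] [Module ℂ V] [StarAddMonoid V] [StarModule ℂ V]
variable (A : AMOUS V)

/-- `eⁿ = e ⊕ ⋯ ⊕ e ∈ Mₙ(V)`. -/
def eN (n : ℕ) : Matrix (Fin n) (Fin n) V := diagE A.e n

/-- The `2n × 2n` matrix `[[a, b], [c, d]]` of `n × n` blocks. -/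
def block2 {n : ℕ} (a b c d : Matrix (Fin n) (Fin n) V) :
    Matrix (Fin (n + n)) (Fin (n + n)) V :=
  fun i j =>
    if hi : (i : ℕ) < n then
      (if hj : (j : ℕ) < n then a ⟨i, hi⟩ ⟨j, hj⟩
       else b ⟨i, hi⟩ ⟨(j : ℕ) - n, by have := j.isLt; omega⟩)
    else
      (if hj : (j : ℕ) < n then c ⟨(i : ℕ) - n, by have := i.isLt; omega⟩ ⟨j, hj⟩
       else d ⟨(i : ℕ) - n, by have := i.isLt; omega⟩ ⟨(j : ℕ) - n, by have := j.isLt; omega⟩)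

end AMOUS
namespace AMOUS

variable {V : Type*} [AddCommGroup V] [Module ℂ V] [StarAddMonoid V] [StarModule ℂ V]
variable (A : AMOUS V)

/-- The matrix norms of a matrix order unit space:
`‖v‖ₙ = inf { k > 0 : [[k eⁿ, v], [v*, k eⁿ]] ∈ M₂ₙ(V)⁺ }`. -/
def mnorm (n : ℕ) (v : Matrix (Fin n) (Fin n) V) : ℝ :=
  sInf {k : ℝ | 0 < k ∧
    block2 ((k : ℂ) • A.eN n) v (mstar v) ((k : ℂ) • A.eN n) ∈ A.pos (n + n)}

/-- Orthogonality `u ⊥ v` (for positive elements): `|u − v| = u + v`. -/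
def Perp {n : ℕ} (u v : Matrix (Fin n) (Fin n) V) : Prop :=
  A.abs n n (u - v) = u + v

/-- `u ⊥_∞ v`: `‖k₁ u + k₂ v‖ = max {‖k₁ u‖, ‖k₂ v‖}` for all real `k₁, k₂`. -/
def PerpInfM {n : ℕ} (u v : Matrix (Fin n) (Fin n) V) : Prop :=
  ∀ k₁ k₂ : ℝ, A.mnorm n ((k₁ : ℂ) • u + (k₂ : ℂ) • v) =
    max (A.mnorm n ((k₁ : ℂ) • u)) (A.mnorm n ((k₂ : ℂ) • v))

/-- `u ⊥_∞^a v`: absolute `∞`-orthogonality. -/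
def PerpInfA {n : ℕ} (u v : Matrix (Fin n) (Fin n) V) : Prop :=
  ∀ u₁ ∈ A.pos n, ∀ v₁ ∈ A.pos n, u - u₁ ∈ A.pos n → v - v₁ ∈ A.pos n → A.PerpInfM u₁ v₁

/-- `(V, {Mₙ(V)⁺}, {|·|}, e)` is an absolute matrix order unit space:
`⊥ = ⊥_∞^a` on each `Mₙ(V)⁺`. -/
def IsAbsolute : Prop :=
  ∀ n, ∀ u ∈ A.pos n, ∀ v ∈ A.pos n, (A.Perp u v ↔ A.PerpInfA u v)

/-- `p` is an order projection in `Mₙ(V)`: `p* = p` and `|2p − eⁿ| = eⁿ`. -/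
def IsOP (n : ℕ) (p : Matrix (Fin n) (Fin n) V) : Prop :=
  mstar p = p ∧ A.abs n n ((2 : ℂ) • p - A.eN n) = A.eN n

/-- `v ∈ M_{m,n}(V)` is a partial isometry: `|v|` and `|v*|` are order projections. -/
def IsPI {m n : ℕ} (v : Matrix (Fin m) (Fin n) V) : Prop :=
  A.IsOP n (A.abs m n v) ∧ A.IsOP m (A.abs n m (mstar v))

end AMOUS

/-- An element of `M_∞(V)`: a matrix at some level `n`. -/
def OPE (V : Type*) : Type _ := Σ n : ℕ, Matrix (Fin n) (Fin n) V

namespace OPE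

variable {V : Type*} [AddCommGroup V] [Module ℂ V] [StarAddMonoid V] [StarModule ℂ V]

/-- Direct sum in `M_∞(V)`. -/
def d (p q : OPE V) : OPE V := ⟨p.1 + q.1, dsum p.2 q.2⟩

/-- The zero order projection (at level 1). -/
def zero (V : Type*) [AddCommGroup V] : OPE V := ⟨1, 0⟩

end OPE

namespace AMOUS

variable {V : Type*} [AddCommGroup V] [Module ℂ V] [StarAddMonoid V] [StarModule ℂ V]
variable (A : AMOUS V)

/-- Membership in `𝒪𝒫_∞(V)`. -/
def IsOPE (p : OPE V) : Prop := A.IsOP p.1 p.2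

/-- `eⁿ` as an element of `𝒪𝒫_∞(V)`. -/
def eOPE (n : ℕ) : OPE V := ⟨n, A.eN n⟩

/-- Partial isometric equivalence `p ∼ q` of order projections: there is a partial
isometry `v` with `p = |v*|` and `q = |v|`. -/
def Sim (p q : OPE V) : Prop :=
  ∃ v : Matrix (Fin p.1) (Fin q.1) V,
    A.IsPI v ∧ p.2 = A.abs q.1 p.1 (mstar v) ∧ q.2 = A.abs p.1 q.1 v

/-- Condition (T). -/
def CondT : Prop :=
  ∀ (m n l : ℕ) (u : Matrix (Fin m) (Fin n) V) (v : Matrix (Fin l) (Fin n) V),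
    A.IsPI u → A.IsPI v → A.abs m n u = A.abs l n v →
    ∃ w : Matrix (Fin m) (Fin l) V, A.IsPI w ∧
      A.abs l m (mstar w) = A.abs n m (mstar u) ∧ A.abs m l w = A.abs n l (mstar v)

/-- Stabilized equivalence `p ≈ q`: `p ⊕ r ∼ q ⊕ r` for some order projection `r`. -/
def ASim (p q : OPE V) : Prop := ∃ r : OPE V, A.IsOPE r ∧ A.Sim (p.d r) (q.d r)

/-- A pair of order projections, representing an element `[(p,q)]` of `K₀(V)`. -/
def IsOPPair (x : OPE V × OPE V) : Prop := A.IsOPE x.1 ∧ A.IsOPE x.2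

/-- The relation `(p₁,q₁) ≡ (p₂,q₂) ↔ p₁ ⊕ q₂ ≈ p₂ ⊕ q₁` defining `K₀(V)`. -/
def Krel (x y : OPE V × OPE V) : Prop := A.ASim (x.1.d y.2) (y.1.d x.2)

/-- Addition of representatives of `K₀(V)` classes. -/
def kadd (x y : OPE V × OPE V) : OPE V × OPE V := (x.1.d y.1, x.2.d y.2)

/-- The representative of the zero class of `K₀(V)`. -/
def kzero : OPE V × OPE V := (OPE.zero V, OPE.zero V)

/-- Representative-level membership in the cone `K₀(V)⁺ = {[(p,0)] : p ∈ 𝒪𝒫_∞(V)}`. -/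
def KPos (x : OPE V × OPE V) : Prop :=
  ∃ p : OPE V, A.IsOPE p ∧ A.Krel x (p, OPE.zero V)

/-- Representative-level order `[x] ≤ [y]` in `K₀(V)`: `[y] − [x] ∈ K₀(V)⁺`. -/
def Kle (x y : OPE V × OPE V) : Prop :=
  ∃ r : OPE V, A.IsOPE r ∧ A.Krel (kadd x (r, OPE.zero V)) y

/-- The order projection `p ∈ Mₙ(V)` is finite: `q ∼ p` and `q ≥ p` imply `q = p`. -/
def FiniteOP (n : ℕ) (p : Matrix (Fin n) (Fin n) V) : Prop :=
  ∀ q : Matrix (Fin n) (Fin n) V, A.IsOP n q → A.Sim ⟨n, q⟩ ⟨n, p⟩ →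
    q - p ∈ A.pos n → q = p

end AMOUS

/-! ### Maps between absolute matrix order unit spaces -/

section Maps

variable {V W : Type*} [AddCommGroup V] [Module ℂ V] [StarAddMonoid V] [StarModule ℂ V]
  [AddCommGroup W] [Module ℂ W] [StarAddMonoid W] [StarModule ℂ W]

/-- The amplification `φₙ` (entrywise application) of a map. -/
def mmap (φ : V →ₗ[ℂ] W) {m n : ℕ} (v : Matrix (Fin m) (Fin n) V) :
    Matrix (Fin m) (Fin n) W :=
  fun i j => φ (v i j)

/-- `φ` is completely `|·|`-preserving: every amplification `φₙ` is `|·|`-preserving. -/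
def CAbsPres (A : AMOUS V) (B : AMOUS W) (φ : V →ₗ[ℂ] W) : Prop :=
  ∀ (n : ℕ) (v : Matrix (Fin n) (Fin n) V), B.abs n n (mmap φ v) = mmap φ (A.abs n n v)

/-- `φ` and `ψ` are completely orthogonal: `φₙ(u) ⊥ ψₙ(v)` for all positive `u, v`. -/
def COrth (A : AMOUS V) (B : AMOUS W) (φ ψ : V →ₗ[ℂ] W) : Prop :=
  ∀ (n : ℕ) (u v : Matrix (Fin n) (Fin n) V), u ∈ A.pos n → v ∈ A.pos n →
    B.Perp (mmap φ u) (mmap ψ v)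

/-- The image of an element of `M_∞(V)` under (the amplifications of) `φ`. -/
def mmapOPE (φ : V →ₗ[ℂ] W) (p : OPE V) : OPE W := ⟨p.1, mmap φ p.2⟩

/-- `F` represents a group homomorphism `K₀(V) → K₀(W)` making the `K₀` diagram of `φ`
commute: it maps `K₀`-representatives to `K₀`-representatives, respects the defining
relation `≡`, is additive, and satisfies `F([(p, 0)]) = [(φ(p), 0)]`. -/
def K0HomProp (A : AMOUS V) (B : AMOUS W) (φ : V →ₗ[ℂ] W)
    (F : OPE V × OPE V → OPE W × OPE W) : Prop :=
  (∀ x, A.IsOPPair x → B.IsOPPair (F x)) ∧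
  (∀ x y, A.IsOPPair x → A.IsOPPair y → A.Krel x y → B.Krel (F x) (F y)) ∧
  (∀ x y, A.IsOPPair x → A.IsOPPair y → B.Krel (F (AMOUS.kadd x y)) (AMOUS.kadd (F x) (F y))) ∧
  (∀ p : OPE V, A.IsOPE p → B.Krel (F (p, OPE.zero V)) (mmapOPE φ p, OPE.zero W))

/-- The completely bounded norm of `φ` with respect to the order unit matrix norms. -/
def cbNorm (A : AMOUS V) (B : AMOUS W) (φ : V →ₗ[ℂ] W) : ℝ :=
  ⨆ n : ℕ, sInf {c : ℝ | 0 ≤ c ∧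
    ∀ v : Matrix (Fin n) (Fin n) V, B.mnorm n (mmap φ v) ≤ c * A.mnorm n v}

end Maps

/-!
If `p ⊕ r ∼ q ⊕ r` with `r ∈ 𝒪𝒫ₙ(V)`, add the complement `r' = eⁿ - r` on both sides. Since
`r ⊥ r'`, the matrix `[[r, r'], [0, 0]]` is a partial isometry with `|v| = r ⊕ r'` and
`|v*| = eⁿ ⊕ 0 ∼ eⁿ`, so `eⁿ ∼ r ⊕ r'` and
`p ⊕ eⁿ ∼ p ⊕ r ⊕ r' ∼ q ⊕ r ⊕ r' ∼ q ⊕ eⁿ`, using that `∼` is transitive under (T) and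
compatible with `⊕`. The absolute values of this non-self-adjoint `v` are computed from the
additivity of `|·|` on orthogonal self-adjoint elements, applied to the dilations
`[[0, x*], [x, 0]]`, which the block swap turns into `x ⊕ x*` without changing `|·|`.
The converse is the case `r = eᵐ`.
-/

section

variable {V : Type*} [AddCommGroup V]

lemma dsum_add {m n r s : ℕ} (a c : Matrix (Fin m) (Fin n) V) (b d : Matrix (Fin r) (Fin s) V) :
    dsum a b + dsum c d = dsum (a + c) (b + d) := by
  funext i j; simp only [dsum, Matrix.add_apply]; split_ifs <;> simp

lemma dsum_sub {m n r s : ℕ} (a c : Matrix (Fin m) (Fin n) V) (b d : Matrix (Fin r) (Fin s) V) :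
    dsum a b - dsum c d = dsum (a - c) (b - d) := by
  funext i j; simp only [dsum, Matrix.sub_apply]; split_ifs <;> simp

lemma dsum_inj {m n r s : ℕ} {a c : Matrix (Fin m) (Fin n) V}
    {b d : Matrix (Fin r) (Fin s) V} (h : dsum a b = dsum c d) : a = c ∧ b = d := by
  constructor
  · funext i j
    simpa [dsum] using congrFun (congrFun h (Fin.castAdd r i)) (Fin.castAdd s j)
  · funext i j
    simpa [dsum] using congrFun (congrFun h (Fin.natAdd m i)) (Fin.natAdd n j)

lemma dsum_dsum_apply {a b c : ℕ} (X : Matrix (Fin a) (Fin a) V)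
    (Y : Matrix (Fin b) (Fin b) V) (Z : Matrix (Fin c) (Fin c) V) (i j : Fin (a + b + c)) :
    dsum (dsum X Y) Z i j =
      dsum X (dsum Y Z) (Fin.cast (Nat.add_assoc a b c) i) (Fin.cast (Nat.add_assoc a b c) j) := by
  have := i.isLt
  have := j.isLt
  simp only [dsum, Fin.val_cast]
  rcases lt_or_ge (i : ℕ) a with hi | hi <;> rcases lt_or_ge (i : ℕ) (a + b) with hi' | hi' <;>
    rcases lt_or_ge (j : ℕ) a with hj | hj <;> rcases lt_or_ge (j : ℕ) (a + b) with hj' | hj' <;>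
    first | omega | simp (disch := omega) only [dif_pos, dif_neg, Nat.sub_sub]

lemma dsum_of_isEmpty {m n : ℕ} (a : Matrix (Fin m) (Fin n) V) (b : Matrix (Fin 0) (Fin 0) V) :
    dsum a b = a := by
  funext i j; simp [dsum]

end

section

variable {V : Type*} [AddCommGroup V] [StarAddMonoid V]

lemma mstar_zero {m n : ℕ} : mstar (0 : Matrix (Fin m) (Fin n) V) = 0 := by
  funext i j; simp [mstar]

lemma mstar_add {m n : ℕ} (u v : Matrix (Fin m) (Fin n) V) :
    mstar (u + v) = mstar u + mstar v := by
  funext i j; simp [mstar]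

lemma mstar_sub {m n : ℕ} (u v : Matrix (Fin m) (Fin n) V) :
    mstar (u - v) = mstar u - mstar v := by
  funext i j; simp [mstar]

lemma mstar_mstar {m n : ℕ} (v : Matrix (Fin m) (Fin n) V) : mstar (mstar v) = v := by
  funext i j; simp [mstar]

lemma mstar_dsum {m n r s : ℕ} (a : Matrix (Fin m) (Fin n) V) (b : Matrix (Fin r) (Fin s) V) :
    mstar (dsum a b) = dsum (mstar a) (mstar b) := by
  funext i j; simp only [dsum, mstar]; split_ifs <;> first | omega | simp

end

section

variable {V : Type*} [AddCommGroup V] [Module ℂ V]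

lemma dsum_smul {m n r s : ℕ} (c : ℂ) (a : Matrix (Fin m) (Fin n) V)
    (b : Matrix (Fin r) (Fin s) V) : c • dsum a b = dsum (c • a) (c • b) := by
  funext i j; simp only [dsum, Matrix.smul_apply]; split_ifs <;> simp

lemma smulB_one {m n : ℕ} (v : Matrix (Fin m) (Fin n) V) : smulB v 1 = v := by
  funext i j; simp [smulB, Matrix.one_apply, ite_smul]

lemma aSmul_add {r m n : ℕ} (a : Matrix (Fin r) (Fin m) ℂ) (u v : Matrix (Fin m) (Fin n) V) :
    aSmul a (u + v) = aSmul a u + aSmul a v := by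
  funext i j; simp [aSmul, smul_add, Finset.sum_add_distrib]

lemma aSmul_permMatrix_apply {m n : ℕ} (σ : Equiv.Perm (Fin m)) (v : Matrix (Fin m) (Fin n) V)
    (i : Fin m) (j : Fin n) : aSmul (σ.permMatrix ℂ) v i j = v (σ i) j := by
  simp [aSmul, PEquiv.toMatrix_apply, ite_smul]

lemma aSmul_inv_permMatrix_aSmul {m n : ℕ} (σ : Equiv.Perm (Fin m))
    (v : Matrix (Fin m) (Fin n) V) :
    aSmul (σ⁻¹.permMatrix ℂ) (aSmul (σ.permMatrix ℂ) v) = v := by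
  funext i j; simp [aSmul_permMatrix_apply]

end

namespace OPE

lemma mk_eq_mk {V : Type*} {k k' : ℕ} (hk : k = k') {M : Matrix (Fin k) (Fin k) V}
    {N : Matrix (Fin k') (Fin k') V} (h : ∀ i j, M i j = N (Fin.cast hk i) (Fin.cast hk j)) :
    (⟨k, M⟩ : OPE V) = ⟨k', N⟩ := by
  subst hk
  congr
  funext i j
  exact h i j

lemma d_assoc {V : Type*} [AddCommGroup V] (x y z : OPE V) :
    (x.d y).d z = x.d (y.d z) :=
  mk_eq_mk _ (dsum_dsum_apply x.2 y.2 z.2)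

end OPE

def blockSwap (m : ℕ) : Equiv.Perm (Fin (m + m)) :=
  Function.Involutive.toPerm
    (fun i => ⟨if (i : ℕ) < m then i + m else i - m, by split_ifs <;> omega⟩)
    (fun i => by ext; dsimp only; split_ifs <;> omega)

lemma blockSwap_val (m : ℕ) (i : Fin (m + m)) :
    (blockSwap m i : ℕ) = if (i : ℕ) < m then i + m else i - m := rfl

lemma mstar_aSmul_blockSwap_dsum {V : Type*} [AddCommGroup V] [Module ℂ V] [StarAddMonoid V]
    {m : ℕ} (a b : Matrix (Fin m) (Fin m) V) :
    mstar (aSmul ((blockSwap m).permMatrix ℂ) (dsum a b)) =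
      aSmul ((blockSwap m).permMatrix ℂ) (dsum (mstar b) (mstar a)) := by
  funext i j
  have := i.isLt
  have := j.isLt
  simp only [mstar, aSmul_permMatrix_apply, dsum, blockSwap_val]
  rcases lt_or_ge (i : ℕ) m with hi' | hi' <;> rcases lt_or_ge (j : ℕ) m with hj' | hj' <;>
    simp (disch := omega) only [if_pos, if_neg, dif_pos, dif_neg, star_zero, Nat.add_sub_cancel]

/-- The self-adjoint dilation `[[0, x*], [x, 0]]` of a square matrix `x`. -/
def dilation {V : Type*} [AddCommGroup V] [Module ℂ V] [StarAddMonoid V] {m : ℕ}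
    (x : Matrix (Fin m) (Fin m) V) : Matrix (Fin (m + m)) (Fin (m + m)) V :=
  aSmul ((blockSwap m).permMatrix ℂ) (dsum x (mstar x))

lemma mstar_dilation {V : Type*} [AddCommGroup V] [Module ℂ V] [StarAddMonoid V] {m : ℕ}
    (x : Matrix (Fin m) (Fin m) V) : mstar (dilation x) = dilation x := by
  rw [dilation, mstar_aSmul_blockSwap_dsum, mstar_mstar]

namespace AMOS

variable {V : Type*} [AddCommGroup V] [Module ℂ V] [StarAddMonoid V] [StarModule ℂ V]
variable (A : AMOS V)

lemma abs_zero (n : ℕ) : A.abs n n 0 = 0 := by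
  simpa using A.abs_real_smul n 0 0 mstar_zero

lemma zero_mem_pos (n : ℕ) : (0 : Matrix (Fin n) (Fin n) V) ∈ A.pos n := by
  simpa [abs_zero] using A.abs_mem n n 0

lemma abs_abs (m n : ℕ) (v : Matrix (Fin m) (Fin n) V) :
    A.abs n n (A.abs m n v) = A.abs m n v :=
  A.abs_of_pos n _ (A.abs_mem m n v)

lemma real_smul_mem_pos {n : ℕ} {k : ℝ} (hk : 0 ≤ k) {v : Matrix (Fin n) (Fin n) V}
    (hv : v ∈ A.pos n) : (k : ℂ) • v ∈ A.pos n := by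
  have h := A.abs_mem n n ((k : ℂ) • v)
  rwa [A.abs_real_smul n k v (A.pos_star n v hv), _root_.abs_of_nonneg hk,
    A.abs_of_pos n v hv] at h

lemma abs_neg {n : ℕ} {v : Matrix (Fin n) (Fin n) V} (hv : mstar v = v) :
    A.abs n n (-v) = A.abs n n v := by
  simpa using A.abs_real_smul n (-1) v hv

lemma eq_zero_of_mem_pos_of_neg_mem_pos {n : ℕ} {v : Matrix (Fin n) (Fin n) V}
    (hv : v ∈ A.pos n) (hv' : -v ∈ A.pos n) : v = 0 := by
  have h : -v = v := by
    rw [← A.abs_of_pos n _ hv', A.abs_neg (A.pos_star n v hv), A.abs_of_pos n v hv]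
  have h2 : (2 : ℂ) • v = 0 := by rw [two_smul]; nth_rewrite 1 [← h]; exact neg_add_cancel v
  simpa using h2

lemma eq_of_sub_mem_pos_of_sub_mem_pos {n : ℕ} {u v : Matrix (Fin n) (Fin n) V}
    (huv : u - v ∈ A.pos n) (hvu : v - u ∈ A.pos n) : u = v :=
  sub_eq_zero.mp (A.eq_zero_of_mem_pos_of_neg_mem_pos huv (by rwa [neg_sub]))

lemma dsum_mem_pos {m k : ℕ} {u : Matrix (Fin m) (Fin m) V} {v : Matrix (Fin k) (Fin k) V}
    (hu : u ∈ A.pos m) (hv : v ∈ A.pos k) : dsum u v ∈ A.pos (m + k) := by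
  have h := A.abs_mem (m + k) (m + k) (dsum u v)
  rwa [A.abs_dsum, A.abs_of_pos m u hu, A.abs_of_pos k v hv] at h

lemma abs_sub_abs_aSmul_mem_pos {r m n : ℕ} {α : Matrix (Fin r) (Fin m) ℂ} (hα : cnorm α ≤ 1)
    (v : Matrix (Fin m) (Fin n) V) : A.abs m n v - A.abs r n (aSmul α v) ∈ A.pos n := by
  have h := A.abs_smul_le r m n n α v 1
  rw [smulB_one, smulB_one, A.abs_abs] at h
  have h' : ((1 - cnorm α : ℝ) : ℂ) • A.abs m n v ∈ A.pos n :=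
    A.real_smul_mem_pos (by linarith) (A.abs_mem m n v)
  convert A.pos_add n _ h _ h' using 1
  push_cast
  module

lemma abs_of_isEmpty {n : ℕ} (z : Matrix (Fin 0) (Fin n) V) : A.abs 0 n z = 0 := by
  have h0 : cnorm (0 : Matrix (Fin 0) (Fin n) ℂ) ≤ 1 := by
    rw [cnorm, norm_zero]
    exact zero_le_one
  have h := A.abs_sub_abs_aSmul_mem_pos h0 (0 : Matrix (Fin n) (Fin n) V)
  rw [Subsingleton.elim (aSmul _ _) z, A.abs_zero, zero_sub] at h
  exact A.eq_zero_of_mem_pos_of_neg_mem_pos (A.abs_mem 0 n z) h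

lemma abs_aSmul_permMatrix {m n : ℕ} (σ : Equiv.Perm (Fin m)) (v : Matrix (Fin m) (Fin n) V) :
    A.abs m n (aSmul (σ.permMatrix ℂ) v) = A.abs m n v := by
  have h := A.abs_sub_abs_aSmul_mem_pos (Matrix.permMatrix_l2_opNorm_le σ⁻¹)
    (aSmul (σ.permMatrix ℂ) v)
  rw [aSmul_inv_permMatrix_aSmul] at h
  exact A.eq_of_sub_mem_pos_of_sub_mem_pos h
    (A.abs_sub_abs_aSmul_mem_pos (Matrix.permMatrix_l2_opNorm_le σ) v)

end AMOS

namespace AMOUS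

variable {V : Type*} [AddCommGroup V] [Module ℂ V] [StarAddMonoid V] [StarModule ℂ V]
variable (A : AMOUS V)

lemma star_e : star A.e = A.e := by
  simpa [mstar, diagE] using congrFun (congrFun (A.pos_star 1 _ A.e_pos) 0) 0

lemma mstar_eN (n : ℕ) : mstar (A.eN n) = A.eN n := by
  funext i j
  by_cases h : i = j
  · simp [mstar, eN, diagE, h, star_e]
  · simp [mstar, eN, diagE, h, Ne.symm h]

lemma eN_add (m k : ℕ) : A.eN (m + k) = dsum (A.eN m) (A.eN k) := by
  funext i j
  simp only [eN, diagE, dsum, Matrix.of_apply, Fin.ext_iff]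
  split_ifs <;> first | rfl | omega

lemma eN_mem_pos (n : ℕ) : A.eN n ∈ A.pos n := by
  induction n with
  | zero => exact Subsingleton.elim (A.abs 0 0 0) (A.eN 0) ▸ A.abs_mem 0 0 0
  | succ k ih => exact A.eN_add k 1 ▸ A.dsum_mem_pos ih A.e_pos

lemma mstar_two_smul_sub_eN {n : ℕ} {P : Matrix (Fin n) (Fin n) V} (hP : mstar P = P) :
    mstar ((2 : ℂ) • P - A.eN n) = (2 : ℂ) • P - A.eN n := by
  rw [mstar_sub, two_smul, mstar_add, hP, mstar_eN]

lemma mem_pos_of_isOP {n : ℕ} {P : Matrix (Fin n) (Fin n) V} (hP : A.IsOP n P) :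
    P ∈ A.pos n := by
  have h := (A.abs_add_self n _ (A.mstar_two_smul_sub_eN hP.1)).1
  rw [hP.2, add_sub_cancel] at h
  have h' := A.real_smul_mem_pos (k := 1 / 2) (by norm_num) h
  rwa [smul_smul, show ((1 / 2 : ℝ) : ℂ) * 2 = 1 by norm_num, one_smul] at h'

lemma isOP_eN (n : ℕ) : A.IsOP n (A.eN n) := by
  refine ⟨A.mstar_eN n, ?_⟩
  rw [two_smul, add_sub_cancel_right, A.abs_of_pos n _ (A.eN_mem_pos n)]

lemma isOP_zero (n : ℕ) : A.IsOP n (0 : Matrix (Fin n) (Fin n) V) := by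
  refine ⟨mstar_zero, ?_⟩
  rw [smul_zero, zero_sub, A.abs_neg (A.mstar_eN n), A.abs_of_pos n _ (A.eN_mem_pos n)]

lemma isOP_dsum {m k : ℕ} {P : Matrix (Fin m) (Fin m) V} {Q : Matrix (Fin k) (Fin k) V}
    (hP : A.IsOP m P) (hQ : A.IsOP k Q) : A.IsOP (m + k) (dsum P Q) := by
  refine ⟨by rw [mstar_dsum, hP.1, hQ.1], ?_⟩
  rw [A.eN_add, dsum_smul, dsum_sub, A.abs_dsum, hP.2, hQ.2]

lemma isOP_eN_sub {n : ℕ} {P : Matrix (Fin n) (Fin n) V} (hP : A.IsOP n P) :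
    A.IsOP n (A.eN n - P) := by
  refine ⟨by rw [mstar_sub, A.mstar_eN, hP.1], ?_⟩
  have h : (2 : ℂ) • (A.eN n - P) - A.eN n = -((2 : ℂ) • P - A.eN n) := by module
  rw [h, A.abs_neg (A.mstar_two_smul_sub_eN hP.1), hP.2]

section Perp

variable {n : ℕ} {u v w : Matrix (Fin n) (Fin n) V}

lemma perp_symm (hu : u ∈ A.pos n) (hv : v ∈ A.pos n) (h : A.Perp u v) : A.Perp v u := by
  have hsa : mstar (u - v) = u - v := by rw [mstar_sub, A.pos_star n u hu, A.pos_star n v hv]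
  rw [Perp, ← neg_sub, A.abs_neg hsa, h, add_comm]

lemma perp_zero (hu : u ∈ A.pos n) : A.Perp u 0 := by
  rw [Perp, sub_zero, add_zero, A.abs_of_pos n u hu]

lemma zero_perp (hv : v ∈ A.pos n) : A.Perp 0 v :=
  A.perp_symm hv (A.zero_mem_pos n) (A.perp_zero hv)

lemma perp_of_le {u' v' : Matrix (Fin n) (Fin n) V} (hu : u ∈ A.pos n) (hv : v ∈ A.pos n)
    (hu' : u' ∈ A.pos n) (hv' : v' ∈ A.pos n) (h : A.Perp u v) (huu' : u - u' ∈ A.pos n)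
    (hvv' : v - v' ∈ A.pos n) : A.Perp u' v' := by
  have h' := A.perp_symm hu hv' (A.absorb n u hu v hv v' hv' h hvv')
  exact A.perp_symm hv' hu' (A.absorb n v' hv' u hu u' hu' h' huu')

lemma perp_add (hu : u ∈ A.pos n) (hv : v ∈ A.pos n) (hw : w ∈ A.pos n) (huv : A.Perp u v)
    (huw : A.Perp u w) : A.Perp u (v + w) := by
  have h := (A.ortho_pm n u hu v hv w hw huv huw).1
  rwa [A.abs_of_pos n (v + w) (A.pos_add n v hv w hw)] at h

lemma add_perp (hu : u ∈ A.pos n) (hv : v ∈ A.pos n) (hw : w ∈ A.pos n) (huw : A.Perp u w)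
    (hvw : A.Perp v w) : A.Perp (u + v) w :=
  A.perp_symm hw (A.pos_add n u hu v hv)
    (A.perp_add hw hu hv (A.perp_symm hu hw huw) (A.perp_symm hv hw hvw))

lemma perp_eN_sub {P : Matrix (Fin n) (Fin n) V} (hP : A.IsOP n P) :
    A.Perp P (A.eN n - P) := by
  have h : P - (A.eN n - P) = (2 : ℂ) • P - A.eN n := by module
  rw [Perp, h, hP.2, add_sub_cancel]

end Perp

lemma perp_dsum {m k : ℕ} {a c : Matrix (Fin m) (Fin m) V} {b d : Matrix (Fin k) (Fin k) V}
    (hac : A.Perp a c) (hbd : A.Perp b d) : A.Perp (dsum a b) (dsum c d) := by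
  rw [Perp, dsum_sub, A.abs_dsum, hac, hbd, dsum_add]

lemma exists_pos_sub_eq_and_add_eq_abs {n : ℕ} {a : Matrix (Fin n) (Fin n) V}
    (ha : mstar a = a) :
    ∃ ap ∈ A.pos n, ∃ an ∈ A.pos n, ap - an = a ∧ ap + an = A.abs n n a := by
  obtain ⟨hplus, hminus⟩ := A.abs_add_self n a ha
  refine ⟨((1 / 2 : ℝ) : ℂ) • (A.abs n n a + a), A.real_smul_mem_pos (by norm_num) hplus,
    ((1 / 2 : ℝ) : ℂ) • (A.abs n n a - a), A.real_smul_mem_pos (by norm_num) hminus, ?_, ?_⟩ <;>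
  · push_cast
    module

lemma abs_add_of_perp {n : ℕ} {a b : Matrix (Fin n) (Fin n) V} (ha : mstar a = a)
    (hb : mstar b = b) (hab : A.Perp (A.abs n n a) (A.abs n n b)) :
    A.abs n n (a + b) = A.abs n n a + A.abs n n b := by
  obtain ⟨ap, hap, an, han, rfl, hsum_a⟩ := A.exists_pos_sub_eq_and_add_eq_abs ha
  obtain ⟨bp, hbp, bn, hbn, rfl, hsum_b⟩ := A.exists_pos_sub_eq_and_add_eq_abs hb
  have hA := A.abs_mem n n (ap - an)
  have hB := A.abs_mem n n (bp - bn)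
  have le_plus_a : A.abs n n (ap - an) - ap ∈ A.pos n := by rwa [← hsum_a, add_sub_cancel_left]
  have le_minus_a : A.abs n n (ap - an) - an ∈ A.pos n := by rwa [← hsum_a, add_sub_cancel_right]
  have le_plus_b : A.abs n n (bp - bn) - bp ∈ A.pos n := by rwa [← hsum_b, add_sub_cancel_left]
  have le_minus_b : A.abs n n (bp - bn) - bn ∈ A.pos n := by rwa [← hsum_b, add_sub_cancel_right]
  have ha_perp : A.Perp ap an := by rw [Perp, hsum_a]
  have hb_perp : A.Perp bp bn := by rw [Perp, hsum_b]
  have hpm : A.Perp ap bn := A.perp_of_le hA hB hap hbn hab le_plus_a le_minus_b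
  have hmp : A.Perp bp an :=
    A.perp_symm han hbp (A.perp_of_le hA hB han hbp hab le_minus_a le_plus_b)
  have key : A.Perp (ap + bp) (an + bn) :=
    A.add_perp hap hbp (A.pos_add n _ han _ hbn) (A.perp_add hap han hbn ha_perp hpm)
      (A.perp_add hbp han hbn hmp hb_perp)
  rw [← hsum_a, ← hsum_b, show ap - an + (bp - bn) = ap + bp - (an + bn) by abel, key]
  abel

lemma abs_dilation {m : ℕ} (x : Matrix (Fin m) (Fin m) V) :
    A.abs (m + m) (m + m) (dilation x) = dsum (A.abs m m x) (A.abs m m (mstar x)) := by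
  rw [dilation, A.abs_aSmul_permMatrix, A.abs_dsum]

lemma abs_add_of_perp_of_perp_mstar {m : ℕ} {u w : Matrix (Fin m) (Fin m) V}
    (h : A.Perp (A.abs m m u) (A.abs m m w))
    (h' : A.Perp (A.abs m m (mstar u)) (A.abs m m (mstar w))) :
    A.abs m m (u + w) = A.abs m m u + A.abs m m w ∧
      A.abs m m (mstar (u + w)) = A.abs m m (mstar u) + A.abs m m (mstar w) := by
  have hdil : dilation (u + w) = dilation u + dilation w := by
    rw [dilation, mstar_add, ← dsum_add, aSmul_add, dilation, dilation]
  have key := A.abs_add_of_perp (mstar_dilation u) (mstar_dilation w)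
    (by rw [A.abs_dilation, A.abs_dilation]; exact A.perp_dsum h h')
  rw [← hdil, A.abs_dilation, A.abs_dilation, A.abs_dilation, dsum_add] at key
  exact dsum_inj key

lemma sim_of_abs {m n : ℕ} {P : Matrix (Fin m) (Fin m) V} {Q : Matrix (Fin n) (Fin n) V}
    (v : Matrix (Fin m) (Fin n) V) (hP : A.IsOP m P) (hQ : A.IsOP n Q)
    (hvP : A.abs n m (mstar v) = P) (hvQ : A.abs m n v = Q) : A.Sim ⟨m, P⟩ ⟨n, Q⟩ :=
  ⟨v, ⟨hvQ ▸ hQ, hvP ▸ hP⟩, hvP.symm, hvQ.symm⟩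

lemma sim_refl {p : OPE V} (hp : A.IsOPE p) : A.Sim p p := by
  have habs : A.abs p.1 p.1 p.2 = p.2 := A.abs_of_pos _ _ (A.mem_pos_of_isOP hp)
  exact A.sim_of_abs p.2 hp hp (by rw [hp.1, habs]) habs

lemma sim_symm {p q : OPE V} (h : A.Sim p q) : A.Sim q p := by
  obtain ⟨v, ⟨hv, hv'⟩, hp, hq⟩ := h
  exact ⟨mstar v, ⟨hv', by rwa [mstar_mstar]⟩, by rwa [mstar_mstar], hp⟩

lemma sim_trans (hT : A.CondT) {p q r : OPE V} (hpq : A.Sim p q) (hqr : A.Sim q r) :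
    A.Sim p r := by
  obtain ⟨u, hu, hpu, hqu⟩ := hpq
  obtain ⟨v, hv, hrv, hqv⟩ := A.sim_symm hqr
  obtain ⟨w, hw, hw₁, hw₂⟩ := hT p.1 q.1 r.1 u v hu hv (hqu ▸ hqv)
  exact ⟨w, hw, hw₁ ▸ hpu, hw₂ ▸ hrv⟩

lemma sim_d {p q p' q' : OPE V} (h : A.Sim p q) (h' : A.Sim p' q') :
    A.Sim (p.d p') (q.d q') := by
  obtain ⟨u, ⟨hu, hu'⟩, hp, hq⟩ := h
  obtain ⟨v, ⟨hv, hv'⟩, hp', hq'⟩ := h'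
  have habs : A.abs _ _ (dsum u v) = dsum q.2 q'.2 := by rw [A.abs_dsum, ← hq, ← hq']
  have habs' : A.abs _ _ (mstar (dsum u v)) = dsum p.2 p'.2 := by
    rw [mstar_dsum, A.abs_dsum, ← hp, ← hp']
  refine ⟨dsum u v, ⟨?_, ?_⟩, habs'.symm, habs.symm⟩
  · show A.IsOP (q.1 + q'.1) (A.abs (p.1 + p'.1) (q.1 + q'.1) (dsum u v))
    rw [habs]; exact A.isOP_dsum (hq ▸ hu) (hq' ▸ hv)
  · show A.IsOP (p.1 + p'.1) (A.abs (q.1 + q'.1) (p.1 + p'.1) (mstar (dsum u v)))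
    rw [habs']; exact A.isOP_dsum (hp ▸ hu') (hp' ▸ hv')

lemma sim_d_zero {n : ℕ} {P : Matrix (Fin n) (Fin n) V} (hP : A.IsOP n P) (k : ℕ) :
    A.Sim ⟨n, P⟩ ⟨n + k, dsum P 0⟩ := by
  let z : Matrix (Fin 0) (Fin k) V := 0
  have hPpos := A.abs_of_pos n P (A.mem_pos_of_isOP hP)
  refine A.sim_of_abs (dsum P z) hP (A.isOP_dsum hP (A.isOP_zero k)) ?_ ?_
  · rw [mstar_dsum]
    refine (A.abs_dsum n n k 0 _ _).trans ?_
    rw [hP.1, hPpos, dsum_of_isEmpty]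
  · refine (A.abs_dsum n n 0 k _ _).trans ?_
    rw [hPpos, A.abs_of_isEmpty]

lemma sim_add_d_zero_of_perp {n : ℕ} {P Q : Matrix (Fin n) (Fin n) V} (hP : A.IsOP n P)
    (hQ : A.IsOP n Q) (hPQ : A.IsOP n (P + Q)) (h : A.Perp P Q) :
    A.Sim ⟨n + n, dsum (P + Q) 0⟩ ⟨n + n, dsum P Q⟩ := by
  have hPpos := A.mem_pos_of_isOP hP
  have hQpos := A.mem_pos_of_isOP hQ
  -- the partial isometry is `W₁ + W₂ = [[P, Q], [0, 0]]`
  let W₁ : Matrix (Fin (n + n)) (Fin (n + n)) V := dsum P 0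
  let W₂ : Matrix (Fin (n + n)) (Fin (n + n)) V :=
    aSmul ((blockSwap n).permMatrix ℂ) (dsum (0 : Matrix (Fin n) (Fin n) V) Q)
  have habs₁ : A.abs _ _ W₁ = dsum P 0 := by
    rw [A.abs_dsum, A.abs_of_pos n P hPpos, A.abs_zero]
  have habs₁' : A.abs _ _ (mstar W₁) = dsum P 0 := by
    rw [mstar_dsum, hP.1, mstar_zero, habs₁]
  have habs₂ : A.abs _ _ W₂ = dsum 0 Q := by
    rw [A.abs_aSmul_permMatrix, A.abs_dsum, A.abs_zero, A.abs_of_pos n Q hQpos]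
  have habs₂' : A.abs _ _ (mstar W₂) = dsum Q 0 := by
    rw [mstar_aSmul_blockSwap_dsum, A.abs_aSmul_permMatrix, A.abs_dsum, hQ.1, mstar_zero,
      A.abs_zero, A.abs_of_pos n Q hQpos]
  obtain ⟨habs, habs'⟩ := A.abs_add_of_perp_of_perp_mstar (u := W₁) (w := W₂)
    (by rw [habs₁, habs₂]; exact A.perp_dsum (A.perp_zero hPpos) (A.zero_perp hQpos))
    (by rw [habs₁', habs₂']; exact A.perp_dsum h (A.perp_zero (A.zero_mem_pos n)))
  refine A.sim_of_abs (W₁ + W₂) (A.isOP_dsum hPQ (A.isOP_zero n)) (A.isOP_dsum hP hQ) ?_ ?_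
  · rw [habs', habs₁', habs₂', dsum_add, add_zero]
  · rw [habs, habs₁, habs₂, dsum_add, add_zero, zero_add]

def complOPE (r : OPE V) : OPE V := ⟨r.1, A.eN r.1 - r.2⟩

lemma isOPE_complOPE {r : OPE V} (hr : A.IsOPE r) : A.IsOPE (A.complOPE r) :=
  A.isOP_eN_sub hr

lemma sim_eOPE_d_complOPE (hT : A.CondT) {r : OPE V} (hr : A.IsOPE r) :
    A.Sim (A.eOPE r.1) (r.d (A.complOPE r)) := by
  have h := A.sim_add_d_zero_of_perp hr (A.isOP_eN_sub hr)
    (by rw [add_sub_cancel]; exact A.isOP_eN r.1) (A.perp_eN_sub hr)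
  rw [add_sub_cancel] at h
  exact A.sim_trans hT (A.sim_d_zero (A.isOP_eN r.1) r.1) h

end AMOUS

theorem statement11_general {V : Type*} [AddCommGroup V] [Module ℂ V] [StarAddMonoid V] [StarModule ℂ V] (A : AMOUS V) (hT : A.CondT)
    (p q : OPE V) (hp : A.IsOPE p) (hq : A.IsOPE q) :
    A.ASim p q ↔ ∃ m : ℕ, A.Sim (p.d (A.eOPE m)) (q.d (A.eOPE m)) := by
  constructor
  · rintro ⟨r, hr, hpq⟩
    have hsplit := A.sim_eOPE_d_complOPE hT hr
    have hp' := A.sim_d (A.sim_refl hp) hsplit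
    have hq' := A.sim_d (A.sim_refl hq) hsplit
    rw [← OPE.d_assoc] at hp' hq'
    exact ⟨r.1, A.sim_trans hT hp'
      (A.sim_trans hT (A.sim_d hpq (A.sim_refl (A.isOPE_complOPE hr))) (A.sim_symm hq'))⟩
  · rintro ⟨m, h⟩
    exact ⟨A.eOPE m, A.isOP_eN m, h⟩

/-- In an absolute matrix order unit space satisfying (T):
`p ≈ q` iff `p ⊕ eᵐ ∼ q ⊕ eᵐ` for some `m ∈ ℕ`. -/
theorem statement11 {V : Type*} [AddCommGroup V] [Module ℂ V] [StarAddMonoid V] [StarModule ℂ V] (A : AMOUS V) (habs : A.IsAbsolute) (hT : A.CondT)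
    (p q : OPE V) (hp : A.IsOPE p) (hq : A.IsOPE q) :
    A.ASim p q ↔ ∃ m : ℕ, A.Sim (p.d (A.eOPE m)) (q.d (A.eOPE m)) :=
  statement11_general A hT p q hp hq
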